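/- For any irreducible polynomials P, Q ∈ F_q[t] with deg Q > 1 + deg P, there exist positive integers e₁ and e₂ such that P^{e₁} > Q^{e₂} (i.e. δ(P^{e₁}) > δ(Q^{e₂})) but S(P^{e₁}) < S(Q^{e₂}) (i.e. δ(S(P^{e₁})) < δ(S(Q^{e₂}))). -/

import Mathlib

set_option linter.unusedSectionVars false
set_option linter.unusedVariables false
set_option maxHeartbeats 1000000
open scoped Classical

open Polynomial

variable {F : Type*} [Field F] [Fintype F] [DecidableEq F]

/-- `delta a f` is the natural number attached to the polynomial `f` via the
enumeration `a : Fin q ≃ F` of the field (`q = Fintype.card F`): if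
`f = a_{i_0} + a_{i_1} t + ⋯ + a_{i_n} t^n` then `delta a f = i_0 + i_1 q + ⋯ + i_n q^n`.
In particular `delta a 0 = 0` whenever `a 0 = 0`. -/
noncomputable def delta (a : Fin (Fintype.card F) ≃ F) (f : F[X]) : ℕ :=
  ∑ j ∈ Finset.range (f.natDegree + 1), (a.symm (f.coeff j) : ℕ) * Fintype.card F ^ j

/-- The inverse of `delta`: the polynomial whose `j`-th coefficient is the `j`-th
base-`q` digit of `m` (under the enumeration `a`). -/
noncomputable def deltaInv (a : Fin (Fintype.card F) ≃ F) (m : ℕ) : F[X] :=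
  ∑ j ∈ Finset.range (m + 1),
    C (a ⟨m / Fintype.card F ^ j % Fintype.card F, Nat.mod_lt _ Fintype.card_pos⟩) * X ^ j

section Aux

variable (a : Fin (Fintype.card F) ≃ F)

local notation "q" => Fintype.card F

lemma hq2 : 2 ≤ q := Fintype.one_lt_card

lemma a_symm_zero (h0 : a 0 = 0) : a.symm 0 = 0 := by
  rw [← h0, Equiv.symm_apply_apply]

lemma coeff_deltaInv (h0 : a 0 = 0) (m j : ℕ) :
    (deltaInv a m).coeff j
      = a ⟨m / q ^ j % q, Nat.mod_lt _ Fintype.card_pos⟩ := by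
  rw [deltaInv, Polynomial.finset_sum_coeff]
  simp only [Polynomial.coeff_C_mul, Polynomial.coeff_X_pow, mul_ite, mul_one, mul_zero]
  rw [Finset.sum_ite_eq (Finset.range (m + 1)) j]
  split_ifs with h
  · rfl
  · have hj : m + 1 ≤ j := by
      by_contra hc
      exact h (Finset.mem_range.2 (by omega))
    have hmq : m < q ^ j := by
      calc m < j := by omega
      _ < 2 ^ j := Nat.lt_two_pow_self
      _ ≤ q ^ j := Nat.pow_le_pow_left (hq2 (F := F)) j
    have hdig : m / q ^ j % q = 0 := by
      rw [Nat.div_eq_of_lt hmq]; rfl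
    have : (⟨m / q ^ j % q, Nat.mod_lt _ Fintype.card_pos⟩ : Fin q) = 0 := by
      apply Fin.ext
      simp [hdig]
    rw [this, h0]

lemma sum_digits (m n : ℕ) :
    ∑ j ∈ Finset.range n, m / q ^ j % q * q ^ j = m % q ^ n := by
  induction n with
  | zero => simp [Nat.mod_one]
  | succ n ih =>
    rw [Finset.sum_range_succ, ih, pow_succ, Nat.mod_mul, mul_comm]

lemma sum_lt_pow (c : ℕ → ℕ) (hc : ∀ k, c k < q) (n : ℕ) :
    ∑ k ∈ Finset.range n, c k * q ^ k < q ^ n := by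
  induction n with
  | zero => simp
  | succ n ih =>
    rw [Finset.sum_range_succ, pow_succ]
    have h1 : c n + 1 ≤ q := hc n
    calc ∑ k ∈ Finset.range n, c k * q ^ k + c n * q ^ n
        < q ^ n + c n * q ^ n := by omega
      _ = (c n + 1) * q ^ n := by ring
      _ ≤ q * q ^ n := Nat.mul_le_mul_right _ h1
      _ = q ^ n * q := mul_comm _ _

lemma delta_deltaInv (h0 : a 0 = 0) (m : ℕ) : delta a (deltaInv a m) = m := by
  set f := deltaInv a m with hf
  have hco : ∀ j, (a.symm (f.coeff j) : ℕ) = m / q ^ j % q := by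
    intro j
    rw [hf, coeff_deltaInv a h0, Equiv.symm_apply_apply]
  have hd : delta a f = m % q ^ (f.natDegree + 1) := by
    rw [delta, ← sum_digits]
    exact Finset.sum_congr rfl fun j _ => by rw [hco]
  have hlt : m < q ^ (f.natDegree + 1) := by
    by_contra hc
    push_neg at hc
    have hm0 : m ≠ 0 := by
      have : 0 < q ^ (f.natDegree + 1) := pow_pos Fintype.card_pos _
      omega
    set L := Nat.log q m with hL
    have h1 : q ^ L ≤ m := Nat.pow_log_le_self q hm0
    have h2 : m < q ^ (L + 1) := Nat.lt_pow_succ_log_self (hq2 (F := F)) m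
    have hLge : f.natDegree + 1 ≤ L := (Nat.le_log_iff_pow_le (hq2 (F := F)) hm0).2 hc
    have hdig : m / q ^ L % q = m / q ^ L := by
      apply Nat.mod_eq_of_lt
      rw [Nat.div_lt_iff_lt_mul (by positivity)]
      calc m < q ^ (L + 1) := h2
        _ = q ^ L * q := pow_succ q L
        _ = q * q ^ L := mul_comm _ _
    have hne : f.coeff L ≠ 0 := by
      rw [hf, coeff_deltaInv a h0]
      intro hz
      have : m / q ^ L % q = 0 := by
        have := a.injective (hz.trans h0.symm)
        exact congrArg Fin.val this
      rw [hdig] at this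
      have := Nat.div_eq_zero_iff.1 this
      have := pow_pos (Fintype.card_pos (α := F)) L
      omega
    have : L ≤ f.natDegree := Polynomial.le_natDegree_of_ne_zero hne
    omega
  rw [hd, Nat.mod_eq_of_lt hlt]

lemma deltaInv_injective (h0 : a 0 = 0) : Function.Injective (deltaInv a) := by
  intro x y h
  have := congrArg (delta a) h
  rwa [delta_deltaInv a h0, delta_deltaInv a h0] at this

lemma digit_sum (c : ℕ → ℕ) (hc : ∀ k, c k < q) (n j : ℕ) :
    (∑ k ∈ Finset.range n, c k * q ^ k) / q ^ j % q = if j < n then c j else 0 := by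
  split_ifs with h
  · -- j < n
    have hn : n = j + ((n - j - 1) + 1) := by omega
    rw [hn, Finset.sum_range_add]
    set A := ∑ k ∈ Finset.range j, c k * q ^ k with hA
    have hAlt : A < q ^ j := sum_lt_pow (F := F) c hc j
    set B := ∑ k ∈ Finset.range (n - j - 1 + 1), c (j + k) * q ^ (j + k) with hB
    have hBe : B = q ^ j * ∑ k ∈ Finset.range (n - j - 1 + 1), c (j + k) * q ^ k := by
      rw [Finset.mul_sum]
      exact Finset.sum_congr rfl fun k _ => by rw [pow_add]; ring
    set C := ∑ k ∈ Finset.range (n - j - 1 + 1), c (j + k) * q ^ k with hC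
    have hdiv : (A + B) / q ^ j = C := by
      rw [hBe, mul_comm (q ^ j) C, Nat.add_mul_div_right _ _ (pow_pos Fintype.card_pos j),
        Nat.div_eq_of_lt hAlt, zero_add]
    rw [hdiv]
    have hCe : C = c j + (∑ k ∈ Finset.range (n - j - 1), c (j + (k + 1)) * q ^ k) * q := by
      rw [hC, Finset.sum_range_succ']
      simp only [add_zero, pow_zero, mul_one]
      rw [add_comm, Finset.sum_mul]
      congr 1
      exact Finset.sum_congr rfl fun k _ => by rw [pow_succ]; ring
    rw [hCe, Nat.add_mul_mod_self_right, Nat.mod_eq_of_lt (hc j)]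
  · -- n ≤ j
    push_neg at h
    have hlt : ∑ k ∈ Finset.range n, c k * q ^ k < q ^ j :=
      lt_of_lt_of_le (sum_lt_pow (F := F) c hc n)
        (Nat.pow_le_pow_right Fintype.card_pos h)
    rw [Nat.div_eq_of_lt hlt]
    rfl

lemma deltaInv_delta (h0 : a 0 = 0) (f : F[X]) : deltaInv a (delta a f) = f := by
  ext j
  rw [coeff_deltaInv a h0]
  have hdig : delta a f / q ^ j % q
      = if j < f.natDegree + 1 then (a.symm (f.coeff j) : ℕ) else 0 := by
    rw [delta]
    exact digit_sum (fun k => (a.symm (f.coeff k) : ℕ)) (fun k => (a.symm (f.coeff k)).isLt) _ j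
  by_cases h : j < f.natDegree + 1
  · have : (⟨delta a f / q ^ j % q, Nat.mod_lt _ Fintype.card_pos⟩ : Fin q)
        = a.symm (f.coeff j) := by
      apply Fin.ext
      simp [hdig, h]
    rw [this, Equiv.apply_symm_apply]
  · have : (⟨delta a f / q ^ j % q, Nat.mod_lt _ Fintype.card_pos⟩ : Fin q) = 0 := by
      apply Fin.ext
      simp [hdig, h]
    rw [this, h0, Polynomial.coeff_eq_zero_of_natDegree_lt (by omega)]

lemma delta_lt_pow {f : F[X]} {n : ℕ} (h : f.natDegree < n) : delta a f < q ^ n := by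
  calc delta a f < q ^ (f.natDegree + 1) :=
        sum_lt_pow (F := F) _ (fun k => (a.symm (f.coeff k)).isLt) _
    _ ≤ q ^ n := Nat.pow_le_pow_right Fintype.card_pos (by omega)

lemma pow_natDegree_le_delta (h0 : a 0 = 0) {f : F[X]} (hf : f ≠ 0) :
    q ^ f.natDegree ≤ delta a f := by
  have hmem : f.natDegree ∈ Finset.range (f.natDegree + 1) := Finset.self_mem_range_succ _
  have h1 : 1 ≤ (a.symm (f.coeff f.natDegree) : ℕ) := by
    rcases Nat.eq_zero_or_pos (a.symm (f.coeff f.natDegree) : ℕ) with h | h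
    · exfalso
      have : a.symm (f.coeff f.natDegree) = 0 := Fin.ext h
      have : f.coeff f.natDegree = 0 := by
        have := congrArg a this
        rwa [Equiv.apply_symm_apply, h0] at this
      exact Polynomial.leadingCoeff_ne_zero.2 hf this
    · exact h
  calc q ^ f.natDegree = 1 * q ^ f.natDegree := (one_mul _).symm
    _ ≤ (a.symm (f.coeff f.natDegree) : ℕ) * q ^ f.natDegree :=
        Nat.mul_le_mul_right _ h1
    _ ≤ delta a f := by
        rw [delta]
        exact Finset.single_le_sum (f := fun j => (a.symm (f.coeff j) : ℕ) * q ^ j)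
          (fun i _ => Nat.zero_le _) hmem

lemma deltaInv_block (h0 : a 0 = 0) {r : ℕ} (b j : ℕ) (hj : j < q ^ r) :
    deltaInv a (b * q ^ r + j) = deltaInv a j + X ^ r * deltaInv a b := by
  ext i
  rw [Polynomial.coeff_add, coeff_deltaInv a h0, coeff_deltaInv a h0,
    mul_comm (X ^ r : F[X]) (deltaInv a b), Polynomial.coeff_mul_X_pow']
  by_cases hir : i < r
  · have hd : (b * q ^ r + j) / q ^ i % q = j / q ^ i % q := by
      have hqr : q ^ r = q ^ i * q ^ (r - i) := by
        rw [← pow_add]; congr 1; omega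
      have h1 : (b * q ^ r + j) / q ^ i = j / q ^ i + b * q ^ (r - i) := by
        rw [hqr, show b * (q ^ i * q ^ (r - i)) + j = j + b * q ^ (r - i) * q ^ i by ring,
          Nat.add_mul_div_right _ _ (pow_pos Fintype.card_pos i)]
      rw [h1]
      have h2 : b * q ^ (r - i) = b * q ^ (r - i - 1) * q := by
        rw [mul_assoc, ← pow_succ]; congr 2; omega
      rw [h2, Nat.add_mul_mod_self_right]
    rw [if_neg (by omega)]
    rw [add_zero]
    congr 1
    exact Fin.ext hd
  · push_neg at hir
    have hd : (b * q ^ r + j) / q ^ i % q = b / q ^ (i - r) % q := by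
      have h1 : (b * q ^ r + j) / q ^ r = b := by
        rw [show b * q ^ r + j = j + b * q ^ r by ring,
          Nat.add_mul_div_right _ _ (pow_pos Fintype.card_pos r),
          Nat.div_eq_of_lt hj, zero_add]
      have h2 : q ^ i = q ^ r * q ^ (i - r) := by
        rw [← pow_add]; congr 1; omega
      rw [h2, ← Nat.div_div_eq_div_mul, h1]
    have hd2 : j / q ^ i % q = 0 := by
      rw [Nat.div_eq_of_lt
        (lt_of_lt_of_le hj (Nat.pow_le_pow_right Fintype.card_pos hir))]
      rfl
    have hz : a ⟨j / q ^ i % q, Nat.mod_lt _ Fintype.card_pos⟩ = 0 := by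
      have : (⟨j / q ^ i % q, Nat.mod_lt _ Fintype.card_pos⟩ : Fin q) = 0 := Fin.ext hd2
      rw [this, h0]
    rw [hz, if_pos hir, zero_add, coeff_deltaInv a h0]
    congr 1
    exact Fin.ext hd

lemma natDegree_deltaInv_lt (h0 : a 0 = 0) {j r : ℕ} (hr : 0 < r) (hj : j < q ^ r) :
    (deltaInv a j).natDegree < r := by
  rcases eq_or_ne (deltaInv a j) 0 with h | h
  · rw [h]; simpa using hr
  · have h1 : q ^ (deltaInv a j).natDegree ≤ j := by
      calc q ^ (deltaInv a j).natDegree ≤ delta a (deltaInv a j) :=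
            pow_natDegree_le_delta a h0 h
        _ = j := delta_deltaInv a h0 j
    have := lt_of_le_of_lt h1 hj
    exact (Nat.pow_lt_pow_iff_right (hq2 (F := F))).1 this

lemma natDegree_deltaInv_le (h0 : a 0 = 0) (m : ℕ) : (deltaInv a m).natDegree ≤ m := by
  rcases eq_or_ne (deltaInv a m) 0 with h | h
  · simp [h]
  · have h1 : q ^ (deltaInv a m).natDegree ≤ m := by
      calc q ^ (deltaInv a m).natDegree ≤ delta a (deltaInv a m) :=
            pow_natDegree_le_delta a h0 h
        _ = m := delta_deltaInv a h0 m
    have h2 : (deltaInv a m).natDegree < 2 ^ (deltaInv a m).natDegree := Nat.lt_two_pow_self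
    have h3 : (2:ℕ) ^ (deltaInv a m).natDegree ≤ q ^ (deltaInv a m).natDegree :=
      Nat.pow_le_pow_left (hq2 (F := F)) _
    omega

/-- If `k` and `k'` lie in the same block of size `q ^ r` and `R` (monic of degree `r`)
divides `deltaInv k' - deltaInv k`, then `k' = k`. -/
lemma block_not_dvd (h0 : a 0 = 0) {R : F[X]} (hR : R.Monic) (hr : 0 < R.natDegree)
    {k k' : ℕ} (hb : k / q ^ R.natDegree = k' / q ^ R.natDegree)
    (hdvd : R ∣ deltaInv a k' - deltaInv a k) : k' = k := by
  set r := R.natDegree with hrdef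
  by_contra hne
  have hk : deltaInv a k = deltaInv a (k % q ^ r) + X ^ r * deltaInv a (k / q ^ r) := by
    have h1 : deltaInv a k = deltaInv a (k / q ^ r * q ^ r + k % q ^ r) := by
      rw [Nat.div_add_mod']
    rw [h1, deltaInv_block a h0 _ _ (Nat.mod_lt _ (pow_pos Fintype.card_pos r))]
  have hk' : deltaInv a k' = deltaInv a (k' % q ^ r) + X ^ r * deltaInv a (k' / q ^ r) := by
    have h1 : deltaInv a k' = deltaInv a (k' / q ^ r * q ^ r + k' % q ^ r) := by
      rw [Nat.div_add_mod']
    rw [h1, deltaInv_block a h0 _ _ (Nat.mod_lt _ (pow_pos Fintype.card_pos r))]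
  have hdiff : deltaInv a k' - deltaInv a k
      = deltaInv a (k' % q ^ r) - deltaInv a (k % q ^ r) := by
    rw [hk, hk', hb]; ring
  have hmodne : k' % q ^ r ≠ k % q ^ r := by
    intro h
    exact hne (by
      rw [← Nat.div_add_mod' k' (q ^ r), ← Nat.div_add_mod' k (q ^ r), hb, h])
  have hnz : deltaInv a (k' % q ^ r) - deltaInv a (k % q ^ r) ≠ 0 := by
    intro h
    exact hmodne (deltaInv_injective a h0 (by rwa [sub_eq_zero] at h))
  have hdeg : (deltaInv a (k' % q ^ r) - deltaInv a (k % q ^ r)).natDegree < r := by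
    have h1 := natDegree_deltaInv_lt a h0 hr (Nat.mod_lt k' (pow_pos Fintype.card_pos r))
    have h2 := natDegree_deltaInv_lt a h0 hr (Nat.mod_lt k (pow_pos Fintype.card_pos r))
    have := Polynomial.natDegree_sub_le (deltaInv a (k' % q ^ r)) (deltaInv a (k % q ^ r))
    omega
  rw [hdiff] at hdvd
  have := Polynomial.natDegree_le_of_dvd hdvd hnz
  omega

lemma count_dvd_le (h0 : a 0 = 0) {R : F[X]} (hR : R.Monic) (hr : 0 < R.natDegree) (m : ℕ) :
    ((Finset.range m).filter fun k => R ∣ deltaInv a m - deltaInv a k).card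
      ≤ m / q ^ R.natDegree := by
  classical
  set r := R.natDegree with hrdef
  have hsub : ∀ k ∈ (Finset.range m).filter fun k => R ∣ deltaInv a m - deltaInv a k,
      k / q ^ r ∈ Finset.range (m / q ^ r) := by
    intro k hk
    rw [Finset.mem_filter, Finset.mem_range] at hk
    obtain ⟨hkm, hdvd⟩ := hk
    rw [Finset.mem_range]
    have hle : k / q ^ r ≤ m / q ^ r := Nat.div_le_div_right (le_of_lt hkm)
    rcases lt_or_eq_of_le hle with h | h
    · exact h
    · exfalso
      have := block_not_dvd a h0 hR hr h hdvd
      omega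
  have hinj : Set.InjOn (fun k => k / q ^ r)
      ((Finset.range m).filter fun k => R ∣ deltaInv a m - deltaInv a k) := by
    intro k hk k' hk' hkk'
    simp only [Finset.coe_filter, Set.mem_setOf_eq, Finset.mem_range] at hk hk'
    have hdvd : R ∣ deltaInv a k' - deltaInv a k := by
      have := dvd_sub hk.2 hk'.2
      have he : deltaInv a m - deltaInv a k - (deltaInv a m - deltaInv a k')
          = deltaInv a k' - deltaInv a k := by ring
      rwa [he] at this
    exact (block_not_dvd a h0 hR hr hkk' hdvd).symm
  calc ((Finset.range m).filter fun k => R ∣ deltaInv a m - deltaInv a k).card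
      ≤ (Finset.range (m / q ^ r)).card := Finset.card_le_card_of_injOn _ hsub hinj
    _ = m / q ^ r := Finset.card_range _

lemma exists_block_dvd (h0 : a 0 = 0) {R : F[X]} (hR : R.Monic) (hr : 0 < R.natDegree)
    (f : F[X]) (b : ℕ) :
    ∃ j < q ^ R.natDegree, R ∣ f - deltaInv a (b * q ^ R.natDegree + j) := by
  set r := R.natDegree with hrdef
  set h := f - X ^ r * deltaInv a b with hh
  have hdeg : (h %ₘ R).natDegree < r := by
    rcases eq_or_ne (h %ₘ R) 0 with hz | hz
    · rw [hz]; simpa using hr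
    · have := Polynomial.degree_modByMonic_lt h hR
      have h2 : (h %ₘ R).degree < (r : WithBot ℕ) := by
        rwa [Polynomial.degree_eq_natDegree hR.ne_zero] at this
      exact (Polynomial.natDegree_lt_iff_degree_lt hz).2 h2
  refine ⟨delta a (h %ₘ R), delta_lt_pow a hdeg, ?_⟩
  rw [deltaInv_block a h0 b _ (delta_lt_pow a hdeg), deltaInv_delta a h0]
  refine ⟨h /ₘ R, ?_⟩
  have hmd := Polynomial.modByMonic_add_div h R
  rw [hh] at hmd ⊢
  linear_combination -hmd

lemma pow_dvd_prod_range (h0 : a 0 = 0) {R : F[X]} (hR : R.Monic) (hr : 0 < R.natDegree)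
    (f : F[X]) (e : ℕ) :
    R ^ e ∣ ∏ k ∈ Finset.range (e * q ^ R.natDegree), (f - deltaInv a k) := by
  induction e with
  | zero => simp
  | succ e ih =>
    rw [Nat.succ_mul, Finset.prod_range_add, pow_succ]
    refine mul_dvd_mul ih ?_
    obtain ⟨j, hj, hdvd⟩ := exists_block_dvd a h0 hR hr f e
    exact hdvd.trans (Finset.dvd_prod_of_mem _ (Finset.mem_range.2 hj))

end Aux

/-- The factorial of a polynomial: `f! = ∏_{g < f} (f - g)`, the product over all
polynomials `g` with `delta a g < delta a f`; in particular `0! = 1`. -/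
noncomputable def pfact (a : Fin (Fintype.card F) ≃ F) (f : F[X]) : F[X] :=
  ∏ m ∈ Finset.range (delta a f), (f - deltaInv a m)

/-- The Smarandache function: `S a 0 = 0`, and for `f ≠ 0`, `S a f` is the smallest
polynomial `g` (in the order given by `delta`) such that `f ∣ g!`. -/
noncomputable def S (a : Fin (Fintype.card F) ≃ F) (f : F[X]) : F[X] :=
  if f = 0 then 0 else deltaInv a (sInf {m : ℕ | f ∣ pfact a (deltaInv a m)})

lemma nat_geom_div_le {c : ℕ} (hc : 2 ≤ c) (N : ℕ) :
    ∀ m : ℕ, (c - 1) * ∑ i ∈ Finset.range N, m / c ^ (i + 1) ≤ m := by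
  induction N with
  | zero => simp
  | succ N ih =>
    intro m
    rw [Finset.sum_range_succ']
    have he : ∑ i ∈ Finset.range N, m / c ^ (i + 1 + 1)
        = ∑ i ∈ Finset.range N, (m / c) / c ^ (i + 1) :=
      Finset.sum_congr rfl fun i _ => by rw [Nat.div_div_eq_div_mul, ← pow_succ']
    rw [he]
    have hz : m / c ^ (0 + 1) = m / c := by norm_num
    rw [hz]
    have h1 := ih (m / c)
    have h2 : c * (m / c) ≤ m := Nat.mul_div_le m c
    set T := ∑ i ∈ Finset.range N, (m / c) / c ^ (i + 1)
    have h3 : (c - 1) * (T + m / c) = (c - 1) * T + (c - 1) * (m / c) := Nat.mul_add _ _ _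
    have h5 : m / c + (c - 1) * (m / c) = c * (m / c) := by
      have hcc : c - 1 + 1 = c := by omega
      calc m / c + (c - 1) * (m / c) = (c - 1 + 1) * (m / c) := by ring
        _ = c * (m / c) := by rw [hcc]
    calc (c - 1) * (T + m / c) = (c - 1) * T + (c - 1) * (m / c) := h3
      _ ≤ m / c + (c - 1) * (m / c) := Nat.add_le_add_right h1 _
      _ = c * (m / c) := h5
      _ ≤ m := h2

section Aux2

variable (a : Fin (Fintype.card F) ≃ F)

local notation "q" => Fintype.card F

lemma pow_dvd_pfact (h0 : a 0 = 0) {R : F[X]} (hR : R.Monic) (hr : 0 < R.natDegree) (e : ℕ) :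
    R ^ e ∣ pfact a (deltaInv a (e * q ^ R.natDegree)) := by
  rw [pfact, delta_deltaInv a h0]
  exact pow_dvd_prod_range a h0 hR hr _ e

lemma not_pow_dvd_pfact (h0 : a 0 = 0) {R : F[X]} (hR : R.Monic) (hRi : Irreducible R)
    {e m : ℕ} (hm : m < e * (q ^ R.natDegree - 1)) :
    ¬ R ^ e ∣ pfact a (deltaInv a m) := by
  intro hdvd
  set r := R.natDegree with hrdef
  have hr : 0 < r := hRi.natDegree_pos
  have hprime : Prime R := hRi.prime
  rw [pfact, delta_deltaInv a h0] at hdvd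
  set f := deltaInv a m with hf
  have hne : ∀ k ∈ Finset.range m, f - deltaInv a k ≠ 0 := by
    intro k hk
    rw [Finset.mem_range] at hk
    intro h
    have : deltaInv a m = deltaInv a k := by rwa [sub_eq_zero] at h
    have := deltaInv_injective a h0 this
    omega
  -- finiteness and multiplicity values
  have hfin : ∀ k ∈ Finset.range m, FiniteMultiplicity R (f - deltaInv a k) := fun k hk =>
    FiniteMultiplicity.of_prime_left hprime (hne k hk)
  -- step 1: e ≤ sum of multiplicities
  have h1 : (e : ℕ∞) ≤ ∑ k ∈ Finset.range m, emultiplicity R (f - deltaInv a k) := by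
    rw [← Finset.emultiplicity_prod hprime]
    calc (e : ℕ∞) = emultiplicity R (R ^ e) :=
          (emultiplicity_pow_self_of_prime hprime e).symm
      _ ≤ _ := emultiplicity_le_emultiplicity_of_dvd_right hdvd
  have h2 : ∑ k ∈ Finset.range m, emultiplicity R (f - deltaInv a k)
      = ((∑ k ∈ Finset.range m, multiplicity R (f - deltaInv a k) : ℕ) : ℕ∞) := by
    rw [Nat.cast_sum]
    exact Finset.sum_congr rfl fun k hk => (hfin k hk).emultiplicity_eq_multiplicity
  have h3 : e ≤ ∑ k ∈ Finset.range m, multiplicity R (f - deltaInv a k) := by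
    rw [h2] at h1
    exact_mod_cast h1
  -- step 2: each multiplicity is at most m
  have hvle : ∀ k ∈ Finset.range m, multiplicity R (f - deltaInv a k) ≤ m := by
    intro k hk
    rw [Finset.mem_range] at hk
    have hdvd2 : R ^ multiplicity R (f - deltaInv a k) ∣ f - deltaInv a k :=
      pow_multiplicity_dvd R _
    have hdeg := Polynomial.natDegree_le_of_dvd hdvd2 (hne k (Finset.mem_range.2 hk))
    rw [Polynomial.natDegree_pow] at hdeg
    have hdegf : f.natDegree ≤ m := natDegree_deltaInv_le a h0 m
    have hdegk : (deltaInv a k).natDegree ≤ m := le_trans (natDegree_deltaInv_le a h0 k) (by omega)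
    have := Polynomial.natDegree_sub_le f (deltaInv a k)
    have hub : (f - deltaInv a k).natDegree ≤ m := by
      omega
    have := le_trans hdeg hub
    calc multiplicity R (f - deltaInv a k) ≤ multiplicity R (f - deltaInv a k) * r :=
          Nat.le_mul_of_pos_right _ hr
      _ ≤ m := this
  -- step 3: multiplicity as a count
  have hcount : ∀ k ∈ Finset.range m, multiplicity R (f - deltaInv a k)
      = ((Finset.range m).filter fun i => R ^ (i + 1) ∣ f - deltaInv a k).card := by
    intro k hk
    have hfink := hfin k hk
    have : ((Finset.range m).filter fun i => R ^ (i + 1) ∣ f - deltaInv a k)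
        = Finset.range (multiplicity R (f - deltaInv a k)) := by
      ext i
      simp only [Finset.mem_filter, Finset.mem_range]
      constructor
      · rintro ⟨him, hd⟩
        have := hfink.pow_dvd_iff_le_multiplicity.1 hd
        omega
      · intro hi
        refine ⟨lt_of_lt_of_le hi (hvle k hk), ?_⟩
        exact hfink.pow_dvd_iff_le_multiplicity.2 (by omega)
    rw [this, Finset.card_range]
  -- step 4: swap sums
  have h4 : ∑ k ∈ Finset.range m, multiplicity R (f - deltaInv a k)
      = ∑ i ∈ Finset.range m,
          ((Finset.range m).filter fun k => R ^ (i + 1) ∣ f - deltaInv a k).card := by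
    calc ∑ k ∈ Finset.range m, multiplicity R (f - deltaInv a k)
        = ∑ k ∈ Finset.range m,
            ((Finset.range m).filter fun i => R ^ (i + 1) ∣ f - deltaInv a k).card :=
          Finset.sum_congr rfl hcount
      _ = ∑ k ∈ Finset.range m, ∑ i ∈ Finset.range m,
            if R ^ (i + 1) ∣ f - deltaInv a k then 1 else 0 := by
          exact Finset.sum_congr rfl fun k _ => by rw [Finset.card_filter]
      _ = ∑ i ∈ Finset.range m, ∑ k ∈ Finset.range m,
            if R ^ (i + 1) ∣ f - deltaInv a k then 1 else 0 := Finset.sum_comm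
      _ = _ := Finset.sum_congr rfl fun i _ => by rw [← Finset.card_filter]
  -- step 5: bound each count
  have h5 : ∀ i, ((Finset.range m).filter fun k => R ^ (i + 1) ∣ f - deltaInv a k).card
      ≤ m / (q ^ r) ^ (i + 1) := by
    intro i
    have hmon : (R ^ (i + 1)).Monic := hR.pow _
    have hdeg : (R ^ (i + 1)).natDegree = (i + 1) * r := Polynomial.natDegree_pow _ _
    have := count_dvd_le a h0 hmon (by rw [hdeg]; positivity) m
    rw [hdeg] at this
    calc ((Finset.range m).filter fun k => R ^ (i + 1) ∣ f - deltaInv a k).card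
        ≤ m / q ^ ((i + 1) * r) := this
      _ = m / (q ^ r) ^ (i + 1) := by rw [← pow_mul, mul_comm]
  -- combine
  have h6 : e ≤ ∑ i ∈ Finset.range m, m / (q ^ r) ^ (i + 1) := by
    calc e ≤ ∑ k ∈ Finset.range m, multiplicity R (f - deltaInv a k) := h3
      _ = _ := h4
      _ ≤ ∑ i ∈ Finset.range m, m / (q ^ r) ^ (i + 1) :=
          Finset.sum_le_sum fun i _ => h5 i
  have hc2 : 2 ≤ q ^ r := by
    calc 2 = 2 ^ 1 := rfl
      _ ≤ 2 ^ r := Nat.pow_le_pow_right (by omega) hr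
      _ ≤ q ^ r := Nat.pow_le_pow_left (hq2 (F := F)) _
  have h7 := nat_geom_div_le hc2 m m
  have h8 : (q ^ r - 1) * e ≤ (q ^ r - 1) * ∑ i ∈ Finset.range m, m / (q ^ r) ^ (i + 1) :=
    Nat.mul_le_mul_left _ h6
  have h9 : e * (q ^ r - 1) ≤ m := by
    rw [mul_comm]
    exact le_trans h8 h7
  omega

end Aux2

lemma two_pow_ge_add_two {s : ℕ} (hs : 2 ≤ s) : s + 2 ≤ 2 ^ s := by
  induction s with
  | zero => omega
  | succ n ih =>
    rcases Nat.lt_or_ge n 2 with h | h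
    · have hn : n = 1 := by omega
      subst hn; norm_num
    · have hone := ih h
      have htwo : (2:ℕ) ^ (n + 1) = 2 * 2 ^ n := by ring
      omega

/-- Proposition 3.9: for irreducible `P, Q` with `deg Q > 1 + deg P`, there are positive
integers `e₁, e₂` with `P^{e₁} > Q^{e₂}` but `S(P^{e₁}) < S(Q^{e₂})` (order via `delta`). -/
theorem smarandache_not_monotone (a : Fin (Fintype.card F) ≃ F) (h0 : a 0 = 0)
    (h1 : a 1 = 1) (P Q : F[X]) (hP : Irreducible P) (hQ : Irreducible Q)
    (hdeg : 1 + P.natDegree < Q.natDegree) :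
    ∃ e₁ e₂ : ℕ, 0 < e₁ ∧ 0 < e₂ ∧ delta a (Q ^ e₂) < delta a (P ^ e₁) ∧
      delta a (S a (P ^ e₁)) < delta a (S a (Q ^ e₂)) := by
  classical
  have hq2' : 2 ≤ Fintype.card F := hq2 (F := F)
  have hd1 : 0 < P.natDegree := hP.natDegree_pos
  have hD1 : 0 < Q.natDegree := hQ.natDegree_pos
  set d := P.natDegree with hdd
  set D := Q.natDegree with hDD
  have hDd : d + 2 ≤ D := by omega
  set A := Fintype.card F ^ d with hAdef
  set B := Fintype.card F ^ D with hBdef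
  set N := A + 1 with hNdef
  set e₁ := D * N + 1 with he₁
  set e₂ := d * N with he₂
  have hNpos : 0 < N := by rw [hNdef]; omega
  have he₁pos : 0 < e₁ := by rw [he₁]; omega
  have he₂pos : 0 < e₂ := Nat.mul_pos hd1 hNpos
  have hPne : P ≠ 0 := hP.ne_zero
  have hQne : Q ≠ 0 := hQ.ne_zero
  -- arithmetic facts
  have hA2 : 2 ≤ A := by
    calc 2 = 2 ^ 1 := rfl
      _ ≤ 2 ^ d := Nat.pow_le_pow_right (by omega) hd1
      _ ≤ A := Nat.pow_le_pow_left hq2' d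
  have hAd : d + 1 ≤ A := by
    have h2 : d < 2 ^ d := Nat.lt_two_pow_self
    have h3 : (2:ℕ) ^ d ≤ A := Nat.pow_le_pow_left hq2' d
    omega
  have hB1 : 1 ≤ B := by rw [hBdef]; exact Nat.one_le_pow _ _ Fintype.card_pos
  have hBsplit : B = A * Fintype.card F ^ (D - d) := by
    rw [hAdef, hBdef, ← pow_add]
    congr 1
    omega
  have claimC : (D + 1) * A ≤ d * B := by
    have hspow : D - d + 2 ≤ 2 ^ (D - d) := two_pow_ge_add_two (by omega)
    have h2q : (2:ℕ) ^ (D - d) ≤ Fintype.card F ^ (D - d) := Nat.pow_le_pow_left hq2' _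
    have hin : D + 1 ≤ d * Fintype.card F ^ (D - d) := by
      have hmul : d * (D - d + 2) ≤ d * Fintype.card F ^ (D - d) :=
        Nat.mul_le_mul_left d (le_trans hspow h2q)
      have hexp : d * (D - d + 2) = d * (D - d) + 2 * d := by ring
      have hge : D - d ≤ d * (D - d) := Nat.le_mul_of_pos_left _ hd1
      omega
    calc (D + 1) * A ≤ (d * Fintype.card F ^ (D - d)) * A := Nat.mul_le_mul_right A hin
      _ = d * (A * Fintype.card F ^ (D - d)) := by ring
      _ = d * B := by rw [← hBsplit]
  have harith : e₁ * A < e₂ * (B - 1) := by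
    obtain ⟨B', hB'⟩ : ∃ B', B = B' + 1 := ⟨B - 1, by omega⟩
    rw [hB']
    have hBs : B' + 1 - 1 = B' := by omega
    rw [hBs]
    rw [hB'] at claimC
    have hexp : (D + 1) * A = D * A + A := by ring
    have hdist : d * (B' + 1) = d * B' + d := by ring
    have h6 : D * A + 1 ≤ d * B' := by omega
    have h7 : N * (D * A + 1) ≤ N * (d * B') := Nat.mul_le_mul_left N h6
    have h8 : N * (D * A + 1) = D * N * A + N := by ring
    have h9 : N * (d * B') = d * N * B' := by ring
    have h10 : e₁ * A = D * N * A + A := by rw [he₁]; ring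
    have h11 : e₂ * B' = d * N * B' := by rw [he₂]
    omega
  refine ⟨e₁, e₂, he₁pos, he₂pos, ?_, ?_⟩
  · -- delta comparison
    have hlt : delta a (Q ^ e₂) < Fintype.card F ^ (e₂ * D + 1) :=
      delta_lt_pow a (by rw [Polynomial.natDegree_pow, ← hDD]; omega)
    have hexp : e₂ * D + 1 ≤ e₁ * d := by
      have h12 : e₂ * D = d * N * D := by rw [he₂]
      have h13 : e₁ * d = D * N * d + d := by rw [he₁]; ring
      have h14 : d * N * D = D * N * d := by ring
      omega
    have hle2 : Fintype.card F ^ (e₂ * D + 1) ≤ Fintype.card F ^ (e₁ * d) :=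
      Nat.pow_le_pow_right (by omega) hexp
    have hle3 : Fintype.card F ^ (e₁ * d) ≤ delta a (P ^ e₁) := by
      have hne : P ^ e₁ ≠ 0 := pow_ne_zero _ hPne
      have := pow_natDegree_le_delta a h0 hne
      rwa [Polynomial.natDegree_pow, ← hdd] at this
    omega
  · -- S comparison
    have hP'm : (normalize P).Monic := Polynomial.monic_normalize hPne
    have hQ'm : (normalize Q).Monic := Polynomial.monic_normalize hQne
    have hP'i : Irreducible (normalize P) := (normalize_associated P).symm.irreducible hP
    have hQ'i : Irreducible (normalize Q) := (normalize_associated Q).symm.irreducible hQ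
    have hP'd : (normalize P).natDegree = d :=
      Polynomial.natDegree_eq_of_degree_eq (Polynomial.degree_normalize)
    have hQ'd : (normalize Q).natDegree = D :=
      Polynomial.natDegree_eq_of_degree_eq (Polynomial.degree_normalize)
    have hassocP : ∀ x : F[X], P ^ e₁ ∣ x ↔ (normalize P) ^ e₁ ∣ x := fun x =>
      (Associated.pow_pow (normalize_associated P).symm).dvd_iff_dvd_left
    have hassocQ : ∀ x : F[X], Q ^ e₂ ∣ x ↔ (normalize Q) ^ e₂ ∣ x := fun x =>
      (Associated.pow_pow (normalize_associated Q).symm).dvd_iff_dvd_left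
    have hSP : delta a (S a (P ^ e₁)) = sInf {m : ℕ | P ^ e₁ ∣ pfact a (deltaInv a m)} := by
      rw [S, if_neg (pow_ne_zero _ hPne), delta_deltaInv a h0]
    have hSQ : delta a (S a (Q ^ e₂)) = sInf {m : ℕ | Q ^ e₂ ∣ pfact a (deltaInv a m)} := by
      rw [S, if_neg (pow_ne_zero _ hQne), delta_deltaInv a h0]
    have hub : sInf {m : ℕ | P ^ e₁ ∣ pfact a (deltaInv a m)} ≤ e₁ * A := by
      apply Nat.sInf_le
      show P ^ e₁ ∣ pfact a (deltaInv a (e₁ * A))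
      rw [hassocP]
      have := pow_dvd_pfact a h0 hP'm (by rw [hP'd]; omega) e₁
      rwa [hP'd] at this
    have hnonempty : {m : ℕ | Q ^ e₂ ∣ pfact a (deltaInv a m)}.Nonempty := by
      refine ⟨e₂ * B, ?_⟩
      show Q ^ e₂ ∣ pfact a (deltaInv a (e₂ * B))
      rw [hassocQ]
      have := pow_dvd_pfact a h0 hQ'm (by rw [hQ'd]; omega) e₂
      rwa [hQ'd] at this
    have hmem := Nat.sInf_mem hnonempty
    have hlb : e₂ * (B - 1) ≤ sInf {m : ℕ | Q ^ e₂ ∣ pfact a (deltaInv a m)} := by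
      by_contra hc
      push_neg at hc
      have hmem' : (normalize Q) ^ e₂ ∣
          pfact a (deltaInv a (sInf {m : ℕ | Q ^ e₂ ∣ pfact a (deltaInv a m)})) :=
        (hassocQ _).1 hmem
      exact not_pow_dvd_pfact a h0 hQ'm hQ'i (by rw [hQ'd]; exact hc) hmem'
    rw [hSP, hSQ]
    omega
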